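/- arXiv:2109.14913 — 3 statements merged into one kernel-verified Lean document; each statement's English description precedes it below -/
import Mathlib

section
/- Let k : ℝᵖ × ℝᵖ → ℝ be a symmetric function and a₁, a₂, a₃, a₄ ∈ ℝᵖ. Define ψ(a₁,a₂,a₃,a₄) = (1/2)·Σ_{1≤i<j≤4} k(aᵢ,aⱼ)² − (1/4)·Σ_{i=1}^{4} (Σ_{j≠i} k(aᵢ,aⱼ))² + (1/6)·(Σ_{1≤i<j≤4} k(aᵢ,aⱼ))². Then ψ(a₁,a₂,a₃,a₄) = (1/24)·(2k(a₁,a₂) + 2k(a₃,a₄) − k(a₁,a₃) − k(a₁,a₄) − k(a₂,a₃) − k(a₂,a₄))² + (1/8)·(k(a₁,a₃) + k(a₂,a₄) − k(a₁,a₄) − k(a₂,a₃))². In particular ψ is nonnegative. -/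
/-!
`ψ` is a quadratic form in the six values `kᵢⱼ = k(aᵢ, aⱼ)`, i.e. in a function on the edges
of the complete graph `K₄`. It vanishes on the edge functions `kᵢⱼ = uᵢ + uⱼ` (which include the
constants) and equals half the squared norm on their orthogonal complement: the two-dimensional
space of edge functions with zero sum that depend only on the perfect matching an edge belongs
to. So `ψ` is half the squared length of the projection onto that space; in terms of the matching
sums `m₁ = k₁₂ + k₃₄`, `m₂ = k₁₃ + k₂₄`, `m₃ = k₁₄ + k₂₃` this is
`(2m₁ - m₂ - m₃)² / 24 + (m₂ - m₃)² / 8`.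
-/

/-- The kernel `ψ` of the pooled-sample variance estimator, built from a symmetric
bivariate function `k` evaluated at four points. -/
noncomputable def psiKernel {p : ℕ} (k : (Fin p → ℝ) → (Fin p → ℝ) → ℝ)
    (a₁ a₂ a₃ a₄ : Fin p → ℝ) : ℝ :=
  (1 / 2) * ((k a₁ a₂) ^ 2 + (k a₁ a₃) ^ 2 + (k a₁ a₄) ^ 2 +
      (k a₂ a₃) ^ 2 + (k a₂ a₄) ^ 2 + (k a₃ a₄) ^ 2)
  - (1 / 4) * ((k a₁ a₂ + k a₁ a₃ + k a₁ a₄) ^ 2 + (k a₂ a₁ + k a₂ a₃ + k a₂ a₄) ^ 2 +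
      (k a₃ a₁ + k a₃ a₂ + k a₃ a₄) ^ 2 + (k a₄ a₁ + k a₄ a₂ + k a₄ a₃) ^ 2)
  + (1 / 6) * (k a₁ a₂ + k a₁ a₃ + k a₁ a₄ + k a₂ a₃ + k a₂ a₄ + k a₃ a₄) ^ 2

section

variable {p : ℕ} (k : (Fin p → ℝ) → (Fin p → ℝ) → ℝ) (a₁ a₂ a₃ a₄ : Fin p → ℝ)

theorem psiKernel_eq_sum_sq (hsymm : ∀ x y, k x y = k y x) :
    psiKernel k a₁ a₂ a₃ a₄ =
      (1 / 24) * (2 * k a₁ a₂ + 2 * k a₃ a₄ - k a₁ a₃ - k a₁ a₄ - k a₂ a₃ - k a₂ a₄) ^ 2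
      + (1 / 8) * (k a₁ a₃ + k a₂ a₄ - k a₁ a₄ - k a₂ a₃) ^ 2 := by
  simp only [psiKernel, hsymm a₂ a₁, hsymm a₃ a₁, hsymm a₃ a₂, hsymm a₄ a₁, hsymm a₄ a₂,
    hsymm a₄ a₃]
  ring

theorem psiKernel_nonneg (hsymm : ∀ x y, k x y = k y x) : 0 ≤ psiKernel k a₁ a₂ a₃ a₄ := by
  rw [psiKernel_eq_sum_sq k a₁ a₂ a₃ a₄ hsymm]
  positivity

end

/-- Algebraic identity expressing `ψ` as a sum of two squares; in particular `ψ ≥ 0`. -/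
theorem stmt_2 {p : ℕ} (k : (Fin p → ℝ) → (Fin p → ℝ) → ℝ)
    (hsymm : ∀ x y, k x y = k y x) (a₁ a₂ a₃ a₄ : Fin p → ℝ) :
    psiKernel k a₁ a₂ a₃ a₄ =
      (1 / 24) * (2 * k a₁ a₂ + 2 * k a₃ a₄ - k a₁ a₃ - k a₁ a₄ - k a₂ a₃ - k a₂ a₄) ^ 2
      + (1 / 8) * (k a₁ a₃ + k a₂ a₄ - k a₁ a₄ - k a₂ a₃) ^ 2 ∧
    0 ≤ psiKernel k a₁ a₂ a₃ a₄ :=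
  ⟨psiKernel_eq_sum_sq k a₁ a₂ a₃ a₄ hsymm, psiKernel_nonneg k a₁ a₂ a₃ a₄ hsymm⟩
end

section
/- Let X = (x₁,...,x_p) have α-dependent coordinates (with α ≥ 1) and x̃_j = x_j − E[x_j]. Then for any fixed s ≥ 2, the number of s-tuples (j₁,...,j_s) ∈ {1,...,p}^s with cum(x̃_{j₁},...,x̃_{j_s}) ≠ 0 is at most 2^{s−1}·(s!)·α^{s−1}·p. -/
/-!
If the joint cumulant of `x̃_{j₁}, …, x̃_{j_s}` is nonzero, the sorted indices
`j_(1) ≤ ⋯ ≤ j_(s)` have all consecutive gaps at most `α`: a larger gap splits the coordinates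
into two groups that are independent by `α`-dependence, and a joint cumulant vanishes as soon as
all mixed moments factor across such a split. Such a tuple is determined by its sorting
permutation, its smallest index and its `s - 1` gaps, so there are at most
`s! · p · (α + 1)^(s-1) ≤ 2^(s-1) · s! · α^(s-1) · p` of them.

For the vanishing, put `g_M(x) = ∑_π (∏_{B ∈ π} M B) · x(x-1)⋯(x-|π|+1)` over the set partitions
`π`, with `M B` the moment of the product over `B`. Its coefficient of `x` is the cumulant, and
its value at `j ∈ ℕ` is `∑_{φ : κ → Fin j} ∏_i M (φ⁻¹ i)`, since exactly `j(j-1)⋯(j-|π|+1)`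
colourings have fibres `π`. When `M` is multiplicative across a split `κ = S ⊔ Sᶜ`, the colouring
sum factors, hence `g_M = g_S · g_{Sᶜ}`; both factors vanish at `0`, so the product has no linear
term.
-/

open MeasureTheory ProbabilityTheory

open Classical in
/-- The joint cumulant `cum(f₁,…,f_s)` of real random variables, defined through the
standard partition formula
`cum(f) = Σ_{π partition of {1,…,s}} (−1)^{|π|−1}(|π|−1)! Π_{B∈π} E[Π_{i∈B} fᵢ]`. -/
noncomputable def jointCum {Ω : Type*} [MeasurableSpace Ω] (μ : Measure Ω)
    {s : ℕ} (f : Fin s → Ω → ℝ) : ℝ :=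
  ∑ P ∈ Finset.univ.filter (fun P : Finset (Finset (Fin s)) =>
      (∀ B ∈ P, B.Nonempty) ∧
      (∀ B ∈ P, ∀ B' ∈ P, B ≠ B' → Disjoint B B') ∧
      P.biUnion id = Finset.univ),
    (-1 : ℝ) ^ (P.card - 1) * (Nat.factorial (P.card - 1) : ℝ) *
      ∏ B ∈ P, ∫ ω, ∏ i ∈ B, f i ω ∂μ

/-- `α`-dependence of the coordinates of a random vector `X = (x₀,…,x_{p−1})`. -/
def AlphaDep {Ω : Type*} [MeasurableSpace Ω] (μ : Measure Ω)
    {p : ℕ} (X : Fin p → Ω → ℝ) (α : ℕ) : Prop :=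
  ∀ j ℓ : ℕ, α < ℓ →
    IndepFun (fun ω => fun i : {i : Fin p // (i : ℕ) ≤ j} => X i ω)
      (fun ω => fun i : {i : Fin p // j + ℓ ≤ (i : ℕ)} => X i ω) μ

open Finset

section Partitions

open Polynomial

theorem descPochhammer_coeff_one {R : Type*} [CommRing R] (n : ℕ) :
    (descPochhammer R (n + 1)).coeff 1 = (-1) ^ n * n.factorial := by
  rw [descPochhammer_succ_left, coeff_X_mul, coeff_zero_eq_eval_zero, eval_comp, eval_sub,
    eval_X, eval_one, descPochhammer_eval_eq_prod_range, ← prod_range_add_one_eq_factorial,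
    Nat.cast_prod, show (-1 : R) ^ n = ∏ _j ∈ range n, (-1 : R) by simp, ← prod_mul_distrib]
  refine prod_congr rfl fun j _ => ?_
  push_cast; ring

variable {κ δ : Type*} [Fintype κ] [DecidableEq κ]

theorem Function.Surjective.card_filter_ker_eq [Fintype δ] [DecidableEq δ] {γ : Type*}
    [Fintype γ] [DecidableEq γ] {β : κ → γ} (hβ : Function.Surjective β) :
    #{φ : κ → δ | ∀ a b, φ a = φ b ↔ β a = β b} =
      (Fintype.card δ).descFactorial (Fintype.card γ) := by
  rw [← Fintype.card_embedding_eq, ← Fintype.card_subtype]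
  exact Fintype.card_congr
    { toFun φ := ⟨fun c => φ.1 (Function.surjInv hβ c), fun c c' h => by
        simpa [Function.surjInv_eq hβ] using (φ.2 _ _).1 h⟩
      invFun e := ⟨e ∘ β, fun _ _ => e.injective.eq_iff⟩
      left_inv φ := Subtype.ext <| funext fun a => (φ.2 _ _).2 (Function.surjInv_eq hβ _)
      right_inv e := by ext c; simp [Function.surjInv_eq hβ] }

namespace Finpartition

theorem card_parts_ne_zero [Nonempty κ] (P : Finpartition (univ : Finset κ)) : #P.parts ≠ 0 :=
  card_ne_zero.2 (P.parts_nonempty univ_nonempty.ne_empty)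

theorem parts_eq_image_part (P : Finpartition (univ : Finset κ)) :
    P.parts = univ.image P.part := by
  ext B
  refine ⟨fun hB => ?_, fun hB => ?_⟩
  · obtain ⟨a, -, rfl⟩ := P.part_surjOn hB
    exact mem_image_of_mem _ (mem_univ a)
  · obtain ⟨a, -, rfl⟩ := mem_image.1 hB
    exact P.part_mem.2 (mem_univ a)

theorem eq_of_part_eq {P Q : Finpartition (univ : Finset κ)} (h : ∀ a, P.part a = Q.part a) :
    P = Q := by
  ext B
  rw [parts_eq_image_part, parts_eq_image_part, funext h]

theorem part_ofSetoid_ker [DecidableEq δ] (φ : κ → δ) (a : κ) :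
    (ofSetoid (Setoid.ker φ)).part a = ({b | φ b = φ a} : Finset κ) := by
  ext b
  rw [mem_part_ofSetoid_iff_rel, mem_filter, Setoid.ker_def, eq_comm]
  simp

theorem ofSetoid_ker_eq_iff [DecidableEq δ] {P : Finpartition (univ : Finset κ)} {φ : κ → δ} :
    ofSetoid (Setoid.ker φ) = P ↔ ∀ a b, φ a = φ b ↔ P.part a = P.part b := by
  have key (a b : κ) : b ∈ (ofSetoid (Setoid.ker φ)).part a ↔ φ a = φ b :=
    mem_part_ofSetoid_iff_rel
  constructor
  · rintro rfl a b
    rw [← key, mem_part_iff_part_eq_part _ (mem_univ b) (mem_univ a), eq_comm]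
  · intro h
    refine eq_of_part_eq fun a => ?_
    ext b
    rw [key, h, mem_part_iff_part_eq_part _ (mem_univ b) (mem_univ a), eq_comm]

theorem card_filter_ofSetoid_ker_eq [Fintype δ] [DecidableEq δ]
    (P : Finpartition (univ : Finset κ)) :
    #{φ : κ → δ | ofSetoid (Setoid.ker φ) = P} = (Fintype.card δ).descFactorial #P.parts := by
  let β (a : κ) : P.parts := ⟨P.part a, P.part_mem.2 (mem_univ a)⟩
  have hβ : Function.Surjective β := fun B => by
    obtain ⟨a, -, ha⟩ := P.part_surjOn B.2
    exact ⟨a, Subtype.ext ha⟩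
  have h := hβ.card_filter_ker_eq (δ := δ)
  simp only [β, Subtype.mk.injEq, Fintype.card_coe] at h
  simp_rw [ofSetoid_ker_eq_iff, h]

theorem prod_parts_ofSetoid_ker {M : Type*} [CommMonoid M] [Fintype δ] [DecidableEq δ]
    {f : Finset κ → M} (hf : f ∅ = 1) (φ : κ → δ) :
    ∏ B ∈ (ofSetoid (Setoid.ker φ)).parts, f B = ∏ i, f {a | φ a = i} := by
  have hparts : (ofSetoid (Setoid.ker φ)).parts =
      (univ.image φ).image fun i => ({a | φ a = i} : Finset κ) := by
    rw [parts_eq_image_part, image_image]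
    exact image_congr fun a _ => part_ofSetoid_ker φ a
  rw [hparts, prod_image]
  · refine prod_subset (subset_univ _) fun i _ hi => ?_
    convert hf
    ext a
    simp only [mem_filter, mem_univ, true_and, notMem_empty, iff_false]
    rintro rfl
    exact hi (mem_image_of_mem _ (mem_univ a))
  · intro i hi i' hi' h
    obtain ⟨a, -, rfl⟩ := mem_image.1 hi
    simpa using (Finset.ext_iff.1 h a).1 (by simp)

end Finpartition

open Classical in
theorem sum_filter_isPartition_eq_sum_finpartition {β : Type*} [AddCommMonoid β]
    (F : Finset (Finset κ) → β) :
    ∑ P ∈ univ.filter (fun P : Finset (Finset κ) => (∀ B ∈ P, B.Nonempty) ∧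
        (∀ B ∈ P, ∀ B' ∈ P, B ≠ B' → Disjoint B B') ∧ P.biUnion id = univ), F P =
      ∑ P : Finpartition (univ : Finset κ), F P.parts := by
  rw [← sum_image fun Q _ Q' _ h => Finpartition.ext h]
  refine sum_congr (ext fun P => ?_) fun _ _ => rfl
  simp only [mem_filter, mem_univ, true_and, mem_image]
  constructor
  · rintro ⟨hne, hdisj, hU⟩
    refine ⟨⟨P, supIndep_iff_pairwiseDisjoint.2 fun B hB B' hB' h => hdisj B hB B' hB' h,
      by rw [sup_eq_biUnion, hU], fun h => (hne ⊥ h).ne_empty rfl⟩, rfl⟩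
  · rintro ⟨Q, -, rfl⟩
    exact ⟨fun B => Q.nonempty_of_mem_parts, fun B hB B' hB' h => Q.disjoint hB hB' h,
      Q.biUnion_parts⟩

variable {R : Type*} [CommRing R]

def partitionCumulant (M : Finset κ → R) : R :=
  ∑ P : Finpartition (univ : Finset κ),
    (-1) ^ (#P.parts - 1) * ((#P.parts - 1).factorial : R) * ∏ B ∈ P.parts, M B

noncomputable def partitionPoly (M : Finset κ → R) : R[X] :=
  ∑ P : Finpartition (univ : Finset κ), (∏ B ∈ P.parts, M B) • descPochhammer R #P.parts

theorem eval_partitionPoly [Fintype δ] [DecidableEq δ] {M : Finset κ → R} (hM : M ∅ = 1) :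
    (partitionPoly M).eval (Fintype.card δ : R) = ∑ φ : κ → δ, ∏ i, M {a | φ a = i} := by
  simp_rw [← Finpartition.prod_parts_ofSetoid_ker hM]
  rw [← sum_fiberwise univ (fun φ : κ → δ => Finpartition.ofSetoid (Setoid.ker φ)),
    partitionPoly, eval_finsetSum]
  refine sum_congr rfl fun P _ => ?_
  rw [sum_congr rfl fun φ hφ => by rw [(mem_filter.1 hφ).2], sum_const,
    Finpartition.card_filter_ofSetoid_ker_eq, eval_smul, descPochhammer_eval_eq_descFactorial,
    nsmul_eq_mul, smul_eq_mul, mul_comm]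

theorem partitionPoly_coeff_zero [Nonempty κ] (M : Finset κ → R) :
    (partitionPoly M).coeff 0 = 0 := by
  rw [partitionPoly, finsetSum_coeff]
  refine sum_eq_zero fun P _ => ?_
  rw [coeff_smul, coeff_zero_eq_eval_zero,
    descPochhammer_ne_zero_eval_zero R P.card_parts_ne_zero, smul_zero]

theorem partitionPoly_coeff_one [Nonempty κ] (M : Finset κ → R) :
    (partitionPoly M).coeff 1 = partitionCumulant M := by
  rw [partitionPoly, partitionCumulant, finsetSum_coeff]
  refine sum_congr rfl fun P _ => ?_
  obtain ⟨n, hn⟩ := Nat.exists_eq_succ_of_ne_zero P.card_parts_ne_zero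
  rw [coeff_smul, hn, descPochhammer_coeff_one, smul_eq_mul, Nat.succ_sub_one, mul_comm]

variable [IsDomain R] [CharZero R]

theorem partitionPoly_eq_mul {M : Finset κ → R} (hM : M ∅ = 1) (p : κ → Prop) [DecidablePred p]
    (hsplit : ∀ B, M B = M {a ∈ B | p a} * M {a ∈ B | ¬ p a}) :
    partitionPoly M = partitionPoly (fun B => M (B.map (Function.Embedding.subtype p))) *
      partitionPoly (fun B => M (B.map (Function.Embedding.subtype (¬ p ·)))) := by
  refine eq_of_infinite_eval_eq _ _ (Set.infinite_of_injective_forall_mem Nat.cast_injective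
    fun j => ?_)
  have hfiber (q : κ → Prop) [DecidablePred q] (φ : κ → Fin j) (i : Fin j) :
      ({a | φ a = i} : Finset κ).filter q =
        ({a : Subtype q | φ a = i} : Finset _).map (Function.Embedding.subtype q) := by
    ext a
    simp [and_comm]
  rw [Set.mem_ofPred_eq, eval_mul, ← Fintype.card_fin j, eval_partitionPoly hM,
    eval_partitionPoly (by simpa), eval_partitionPoly (by simpa), Fintype.sum_mul_sum,
    ← Fintype.sum_prod_type']
  refine Fintype.sum_equiv (Equiv.piEquivPiSubtypeProd p fun _ => Fin j) _ _ fun φ => ?_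
  rw [← prod_mul_distrib]
  refine prod_congr rfl fun i _ => ?_
  rw [hsplit, hfiber, hfiber (¬ p ·)]
  rfl

theorem partitionCumulant_eq_zero_of_split {M : Finset κ → R} (hM : M ∅ = 1) {p : κ → Prop}
    [DecidablePred p] (hp : ∃ a, p a) (hnp : ∃ a, ¬ p a)
    (hsplit : ∀ B, M B = M {a ∈ B | p a} * M {a ∈ B | ¬ p a}) :
    partitionCumulant M = 0 := by
  obtain ⟨a, ha⟩ := hp
  obtain ⟨b, hb⟩ := hnp
  have : Nonempty κ := ⟨a⟩
  have : Nonempty (Subtype p) := ⟨⟨a, ha⟩⟩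
  have : Nonempty {a // ¬ p a} := ⟨⟨b, hb⟩⟩
  rw [← partitionPoly_coeff_one, partitionPoly_eq_mul hM p hsplit, coeff_mul,
    Nat.antidiagonal_succ, sum_cons, Nat.antidiagonal_zero, sum_map, sum_singleton]
  simp [partitionPoly_coeff_zero]

end Partitions

theorem jointCum_eq_partitionCumulant {Ω : Type*} [MeasurableSpace Ω] (μ : Measure Ω) {s : ℕ}
    (f : Fin s → Ω → ℝ) :
    jointCum μ f = partitionCumulant fun B => ∫ ω, ∏ i ∈ B, f i ω ∂μ :=
  sum_filter_isPartition_eq_sum_finpartition _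

theorem Fin.eq_of_monotone_of_sub_eq {n : ℕ} {y y' : Fin (n + 1) → ℕ} (hy : Monotone y)
    (hy' : Monotone y') (h0 : y 0 = y' 0)
    (hd : ∀ k : Fin n, y k.succ - y k.castSucc = y' k.succ - y' k.castSucc) : y = y' := by
  funext k
  induction k using Fin.induction with
  | zero => exact h0
  | succ k ih =>
    have := hd k
    have := hy k.castSucc_le_succ
    have := hy' k.castSucc_le_succ
    omega

def sortedGapTuples (n p α : ℕ) : Finset (Fin (n + 1) → Fin p) :=
  {x | ∀ k : Fin n, (x (Tuple.sort x k.succ) : ℕ) ≤ x (Tuple.sort x k.castSucc) + α}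

theorem card_sortedGapTuples_le (n p α : ℕ) :
    #(sortedGapTuples n p α) ≤ (n + 1).factorial * p * (α + 1) ^ n := by
  let F (x : Fin (n + 1) → Fin p) : Equiv.Perm (Fin (n + 1)) × Fin p × (Fin n → ℕ) :=
    (Tuple.sort x, x (Tuple.sort x 0),
      fun k => x (Tuple.sort x k.succ) - x (Tuple.sort x k.castSucc))
  have hmono (x : Fin (n + 1) → Fin p) : Monotone fun k => (x (Tuple.sort x k) : ℕ) :=
    fun _ _ h => Tuple.monotone_sort x h
  calc _ ≤ #(univ ×ˢ univ ×ˢ Fintype.piFinset fun _ : Fin n => range (α + 1)) := by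
        refine card_le_card_of_injOn F (fun x hx => ?_) fun x _ x' _ h => ?_
        · simp only [sortedGapTuples, coe_filter, mem_univ, true_and, Set.mem_ofPred_eq] at hx
          simp only [F, coe_product, coe_univ, Set.mem_prod, Set.mem_univ, true_and,
            Fintype.coe_piFinset, Set.mem_pi, coe_range, Set.mem_Iio]
          intro k _
          have := hx k
          omega
        · simp only [F, Prod.mk.injEq] at h
          obtain ⟨hσ, h0, hd⟩ := h
          have hy := Fin.eq_of_monotone_of_sub_eq (hmono x) (hmono x') (congrArg Fin.val h0)
            fun k => by simpa [hσ] using congrFun hd k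
          funext u
          exact Fin.ext (by simpa [hσ] using congrFun hy ((Tuple.sort x').symm u))
    _ = (n + 1).factorial * p * (α + 1) ^ n := by
        simp [card_product, Fintype.card_perm, mul_assoc]

section Moments

variable {Ω : Type*} [MeasurableSpace Ω] {μ : Measure Ω}

theorem ProbabilityTheory.IndepFun.integral_prod_mul_prod {ι κ : Type*} {X : ι → Ω → ℝ}
    {P Q : ι → Prop}
    (h : IndepFun (fun ω (i : Subtype P) => X i ω) (fun ω (i : Subtype Q) => X i ω) μ)
    (x : κ → ι) (m : κ → ℝ) {B₁ B₂ : Finset κ} (h₁ : ∀ u ∈ B₁, P (x u)) (h₂ : ∀ u ∈ B₂, Q (x u))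
    (hB₁ : AEStronglyMeasurable (fun ω => ∏ u ∈ B₁, (X (x u) ω - m u)) μ)
    (hB₂ : AEStronglyMeasurable (fun ω => ∏ u ∈ B₂, (X (x u) ω - m u)) μ) :
    ∫ ω, (∏ u ∈ B₁, (X (x u) ω - m u)) * ∏ u ∈ B₂, (X (x u) ω - m u) ∂μ =
      (∫ ω, ∏ u ∈ B₁, (X (x u) ω - m u) ∂μ) * ∫ ω, ∏ u ∈ B₂, (X (x u) ω - m u) ∂μ := by
  have hΦ₁ : Measurable fun v : Subtype P → ℝ => ∏ u ∈ B₁.attach, (v ⟨x u, h₁ u u.2⟩ - m u) :=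
    Finset.measurable_prod _ fun u _ => (measurable_pi_apply _).sub measurable_const
  have hΦ₂ : Measurable fun v : Subtype Q → ℝ => ∏ u ∈ B₂.attach, (v ⟨x u, h₂ u u.2⟩ - m u) :=
    Finset.measurable_prod _ fun u _ => (measurable_pi_apply _).sub measurable_const
  have e₁ (ω : Ω) : ∏ u ∈ B₁.attach, (X (x u) ω - m u) = ∏ u ∈ B₁, (X (x u) ω - m u) :=
    prod_attach B₁ fun u => X (x u) ω - m u
  have e₂ (ω : Ω) : ∏ u ∈ B₂.attach, (X (x u) ω - m u) = ∏ u ∈ B₂, (X (x u) ω - m u) :=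
    prod_attach B₂ fun u => X (x u) ω - m u
  have := (h.comp hΦ₁ hΦ₂).integral_fun_mul_eq_mul_integral
  simp only [Function.comp_def, e₁, e₂] at this
  exact this hB₁ hB₂

theorem jointCum_eq_zero_of_split [IsProbabilityMeasure μ] {s : ℕ} (f : Fin s → Ω → ℝ)
    {p : Fin s → Prop} [DecidablePred p] (hp : ∃ u, p u) (hnp : ∃ u, ¬ p u)
    (hsplit : ∀ B : Finset (Fin s), ∫ ω, ∏ i ∈ B, f i ω ∂μ =
      (∫ ω, ∏ i ∈ B with p i, f i ω ∂μ) * ∫ ω, ∏ i ∈ B with ¬ p i, f i ω ∂μ) :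
    jointCum μ f = 0 := by
  rw [jointCum_eq_partitionCumulant]
  exact partitionCumulant_eq_zero_of_split (by simp) hp hnp hsplit

theorem AlphaDep.jointCum_eq_zero_of_gap {p α : ℕ} {X : Fin p → Ω → ℝ} (hdep : AlphaDep μ X α)
    [IsProbabilityMeasure μ] {s : ℕ} (x : Fin s → Fin p) (m : Fin s → ℝ)
    (hint : ∀ B : Finset (Fin s), Integrable (fun ω => ∏ u ∈ B, (X (x u) ω - m u)) μ) {c : ℕ}
    (hgap : ∀ u, (x u : ℕ) ≤ c ∨ c + α < x u) (hlow : ∃ u, (x u : ℕ) ≤ c)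
    (hhigh : ∃ u, c < x u) :
    jointCum μ (fun u ω => X (x u) ω - m u) = 0 := by
  refine jointCum_eq_zero_of_split _ (p := fun u => (x u : ℕ) ≤ c) hlow
    (by simpa using hhigh) fun B => ?_
  have hfar : ∀ u ∈ B.filter fun u => ¬ (x u : ℕ) ≤ c, c + (α + 1) ≤ x u := fun u hu => by
    have := (mem_filter.1 hu).2
    have := hgap u
    omega
  rw [← (hdep c (α + 1) (Nat.lt_succ_self α)).integral_prod_mul_prod x m
    (fun u hu => (mem_filter.1 hu).2) hfar (hint _).1 (hint _).1]
  simp only [prod_filter_mul_prod_filter_not]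

theorem AlphaDep.mem_sortedGapTuples_of_jointCum_ne_zero {p α : ℕ} {X : Fin p → Ω → ℝ}
    (hdep : AlphaDep μ X α) [IsProbabilityMeasure μ] {n : ℕ} (x : Fin (n + 1) → Fin p)
    (m : Fin (n + 1) → ℝ)
    (hint : ∀ B : Finset (Fin (n + 1)), Integrable (fun ω => ∏ u ∈ B, (X (x u) ω - m u)) μ)
    (hcum : jointCum μ (fun u ω => X (x u) ω - m u) ≠ 0) : x ∈ sortedGapTuples n p α := by
  simp only [sortedGapTuples, mem_filter, mem_univ, true_and]
  intro k
  by_contra! hlt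
  refine hcum (hdep.jointCum_eq_zero_of_gap x m hint (c := x (Tuple.sort x k.castSucc))
    (fun u => ?_) ⟨_, le_rfl⟩ ⟨Tuple.sort x k.succ, by omega⟩)
  obtain ⟨v, rfl⟩ := (Tuple.sort x).surjective u
  rcases le_or_gt v k.castSucc with h | h
  · exact Or.inl (Tuple.monotone_sort x h)
  · have := Tuple.monotone_sort x (Fin.castSucc_lt_iff_succ_le.1 h)
    exact Or.inr (by simp only [Function.comp_apply, Fin.le_def] at this; omega)

end Moments

theorem stmt_15_general {Ω : Type*} [MeasurableSpace Ω] (μ : Measure Ω) [IsProbabilityMeasure μ]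
    {p : ℕ} (α : ℕ) (hα : 1 ≤ α) (X : Fin p → Ω → ℝ)
    (hdep : AlphaDep μ X α) (s : ℕ) (hs : 2 ≤ s)
    (hint : ∀ (g : Fin s → Fin p) (B : Finset (Fin s)),
      Integrable (fun ω => ∏ u ∈ B, (X (g u) ω - ∫ ω', X (g u) ω' ∂μ)) μ) :
    Set.ncard {j : Fin s → Fin p |
        jointCum μ (fun u ω => X (j u) ω - ∫ ω', X (j u) ω' ∂μ) ≠ 0}
      ≤ 2 ^ (s - 1) * Nat.factorial s * α ^ (s - 1) * p := by
  obtain ⟨n, rfl⟩ : ∃ n, s = n + 1 := ⟨s - 1, by omega⟩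
  have hsub : {j : Fin (n + 1) → Fin p |
      jointCum μ (fun u ω => X (j u) ω - ∫ ω', X (j u) ω' ∂μ) ≠ 0} ⊆ ↑(sortedGapTuples n p α) :=
    fun x hx => hdep.mem_sortedGapTuples_of_jointCum_ne_zero x _ (hint x) hx
  calc _ ≤ #(sortedGapTuples n p α) :=
        (Set.ncard_le_ncard hsub (finite_toSet _)).trans_eq (Set.ncard_coe_finset _)
    _ ≤ (n + 1).factorial * p * (α + 1) ^ n := card_sortedGapTuples_le n p α
    _ ≤ (n + 1).factorial * p * (2 * α) ^ n := by gcongr; omega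
    _ = _ := by rw [Nat.add_sub_cancel, mul_pow]; ring

/-- For a random vector with `α`-dependent coordinates, the number of `s`-tuples of indices
with nonvanishing joint cumulant of the centered coordinates is at most
`2^{s−1}·s!·α^{s−1}·p`. -/
theorem stmt_15 {Ω : Type*} [MeasurableSpace Ω] (μ : Measure Ω) [IsProbabilityMeasure μ]
    {p : ℕ} (α : ℕ) (hα : 1 ≤ α) (X : Fin p → Ω → ℝ) (hmeas : ∀ i, Measurable (X i))
    (hdep : AlphaDep μ X α) (s : ℕ) (hs : 2 ≤ s)
    (hint : ∀ (g : Fin s → Fin p) (B : Finset (Fin s)),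
      Integrable (fun ω => ∏ u ∈ B, (X (g u) ω - ∫ ω', X (g u) ω' ∂μ)) μ) :
    Set.ncard {j : Fin s → Fin p |
        jointCum μ (fun u ω => X (j u) ω - ∫ ω', X (j u) ω' ∂μ) ≠ 0}
      ≤ 2 ^ (s - 1) * Nat.factorial s * α ^ (s - 1) * p :=
  stmt_15_general μ α hα X hdep s hs hint
end

section
/- Let X and Y be independent random vectors in ℝᵖ with finite second moments, equal means (Δ = 0), and equal sums of coordinate variances. Let the coordinates of X be x_j with centered versions x̃_j and covariance matrix Σ_X = (σ²_{X,j₁j₂}), similarly for Y. Define L₂^{XY} = Var(|X₁−Y₁|²), L₂^{X} = Var(|X₁−X₂|²), L₂^{Y} = Var(|Y₁−Y₂|²) where X₁,X₂ (resp. Y₁,Y₂) are i.i.d. copies. Then 2·L₂^{XY} − L₂^{X} − L₂^{Y} = −4·‖Σ_X − Σ_Y‖_F², where ‖·‖_F is the Frobenius norm. -/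
/-!
For independent `X ~ μ`, `Y ~ ν`, `varSqDist μ ν` is the variance of `D = ‖X - Y‖²` under
`μ.prod ν`, i.e. `E D² - (E D)²`. Expanding `‖x - y‖² = ‖x‖² - 2⟪x, y⟫ + ‖y‖²` and integrating
against the product measure expresses both moments through moments of `μ` and `ν` of order at
most four. The only term coupling the second moments of both laws is
`E⟪X, Y⟫² = ∑ⱼₖ E[xⱼxₖ] E[yⱼyₖ]`; once the means and `E‖X‖² = E‖Y‖²` agree, every other term
cancels in `2 L₂^{XY} - L₂^X - L₂^Y`, which leaves `-4 ∑ⱼₖ (E[xⱼxₖ] - E[yⱼyₖ])²`. With equal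
means these differences are exactly the entries of `Σ_X - Σ_Y`.
-/

open MeasureTheory

/-- Coordinatewise mean of a distribution on `ℝᵖ`. -/
noncomputable def coordMean {p : ℕ} (ν : Measure (EuclideanSpace ℝ (Fin p))) (j : Fin p) :
    ℝ :=
  ∫ x, x j ∂ν

/-- Covariance matrix entry `σ²_{j₁ j₂} = E[(x_{j₁} − m_{j₁})(x_{j₂} − m_{j₂})]`. -/
noncomputable def covEntry {p : ℕ} (ν : Measure (EuclideanSpace ℝ (Fin p)))
    (j₁ j₂ : Fin p) : ℝ :=
  ∫ x, (x j₁ - coordMean ν j₁) * (x j₂ - coordMean ν j₂) ∂ν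

/-- `L₂ = Var(‖X−Y‖²)` for independent `X ~ ν₁`, `Y ~ ν₂`. -/
noncomputable def varSqDist {p : ℕ} (ν₁ ν₂ : Measure (EuclideanSpace ℝ (Fin p))) : ℝ :=
  ∫ x, ∫ y, (‖x - y‖ ^ 2 - ∫ x', ∫ y', ‖x' - y'‖ ^ 2 ∂ν₂ ∂ν₁) ^ 2 ∂ν₂ ∂ν₁

open ProbabilityTheory Finset
open scoped RealInnerProductSpace

lemma pow_le_pow_add_one_of_le {t : ℝ} (ht : 0 ≤ t) {k n : ℕ} (hkn : k ≤ n) :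
    t ^ k ≤ t ^ n + 1 := by
  rcases le_total t 1 with h | h
  · linarith [pow_le_one₀ ht h (n := k), pow_nonneg ht n]
  · linarith [pow_le_pow_right₀ h hkn]

lemma norm_sub_pow_four {E : Type*} [NormedAddCommGroup E] [InnerProductSpace ℝ E] (x y : E) :
    ‖x - y‖ ^ 4 = ‖x‖ ^ 4 + ‖y‖ ^ 4 + 2 * (‖x‖ ^ 2 * ‖y‖ ^ 2) + 4 * ⟪x, y⟫ ^ 2
      - 4 * ⟪‖x‖ ^ 2 • x, y⟫ - 4 * ⟪x, ‖y‖ ^ 2 • y⟫ := by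
  rw [show ‖x - y‖ ^ 4 = (‖x - y‖ ^ 2) ^ 2 by ring, norm_sub_sq_real, real_inner_smul_left,
    real_inner_smul_right]
  ring

section Integrability

variable {E : Type*} [NormedAddCommGroup E] [MeasurableSpace E] {μ : Measure E} [IsFiniteMeasure μ]
  {n : ℕ}

lemma integrable_of_norm_le_pow {F : Type*} [NormedAddCommGroup F] {k : ℕ}
    (hn : Integrable (fun x => ‖x‖ ^ n) μ) (hkn : k ≤ n) {f : E → F}
    (hf : AEStronglyMeasurable f μ) (hfk : ∀ x, ‖f x‖ ≤ ‖x‖ ^ k) : Integrable f μ :=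
  (hn.add (integrable_const 1)).mono' hf <| .of_forall fun x =>
    (hfk x).trans (pow_le_pow_add_one_of_le (norm_nonneg x) hkn)

variable [BorelSpace E] [SecondCountableTopology E]

lemma integrable_id_of_norm_pow (hn : Integrable (fun x => ‖x‖ ^ n) μ) (h1n : 1 ≤ n) :
    Integrable (fun x => x) μ :=
  integrable_of_norm_le_pow hn h1n aestronglyMeasurable_id fun _ => (pow_one _).ge

lemma integrable_norm_sq_of_norm_pow (hn : Integrable (fun x => ‖x‖ ^ n) μ) (h2n : 2 ≤ n) :
    Integrable (fun x => ‖x‖ ^ 2) μ :=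
  integrable_of_norm_le_pow hn h2n (by fun_prop) fun x => by simp

lemma integrable_norm_sq_smul_of_norm_pow [NormedSpace ℝ E] (hn : Integrable (fun x => ‖x‖ ^ n) μ)
    (h3n : 3 ≤ n) : Integrable (fun x => ‖x‖ ^ 2 • x) μ :=
  integrable_of_norm_le_pow hn h3n (by fun_prop) fun x => by
    rw [norm_smul, norm_pow, norm_norm, ← pow_succ]

variable {ν : Measure E} [IsFiniteMeasure ν]

lemma integrable_norm_sub_pow_four_prod (hμ : Integrable (fun x => ‖x‖ ^ 4) μ)
    (hν : Integrable (fun y => ‖y‖ ^ 4) ν) :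
    Integrable (fun z : E × E => ‖z.1 - z.2‖ ^ 4) (μ.prod ν) :=
  ((hμ.comp_fst ν).add (hν.comp_snd μ)).const_mul (2 ^ 3) |>.mono' (by fun_prop) <|
    .of_forall fun z => by
      rw [Real.norm_eq_abs, abs_of_nonneg (by positivity)]
      exact (pow_le_pow_left₀ (norm_nonneg _) (norm_sub_le _ _) 4).trans
        (add_pow_le (norm_nonneg _) (norm_nonneg _) 4)

lemma memLp_norm_sub_sq_prod (hμ : Integrable (fun x => ‖x‖ ^ 4) μ)
    (hν : Integrable (fun y => ‖y‖ ^ 4) ν) :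
    MemLp (fun z : E × E => ‖z.1 - z.2‖ ^ 2) 2 (μ.prod ν) :=
  (memLp_two_iff_integrable_sq (by fun_prop)).2 <| by
    simpa only [← pow_mul] using integrable_norm_sub_pow_four_prod hμ hν

end Integrability

section Prod

variable {E : Type*} [NormedAddCommGroup E] [InnerProductSpace ℝ E]
  {α β : Type*} [MeasurableSpace α] [MeasurableSpace β] {μ : Measure α} {ν : Measure β}
  {f : α → E} {g : β → E}

lemma MeasureTheory.Integrable.inner_prod (hf : Integrable f μ) (hg : Integrable g ν) :
    Integrable (fun z => ⟪f z.1, g z.2⟫) (μ.prod ν) :=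
  hf.op_fst_snd continuous_inner ⟨1, fun x y => by simpa using abs_real_inner_le_norm x y⟩ hg

lemma integral_inner_prod [CompleteSpace E] [SFinite μ] [SFinite ν] (hf : Integrable f μ)
    (hg : Integrable g ν) :
    ∫ z, ⟪f z.1, g z.2⟫ ∂(μ.prod ν) = ⟪∫ x, f x ∂μ, ∫ y, g y ∂ν⟫ :=
  integral_prod_bilin (innerSL ℝ) hf hg

end Prod

section Moments

variable {E : Type*} [NormedAddCommGroup E] [InnerProductSpace ℝ E] [CompleteSpace E]
  [MeasurableSpace E] [BorelSpace E] [SecondCountableTopology E]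
  {μ ν : Measure E} [IsProbabilityMeasure μ] [IsProbabilityMeasure ν]

lemma integral_norm_sub_sq_prod (hμ : Integrable (fun x => ‖x‖ ^ 2) μ)
    (hν : Integrable (fun y => ‖y‖ ^ 2) ν) :
    ∫ z, ‖z.1 - z.2‖ ^ 2 ∂(μ.prod ν)
      = ∫ x, ‖x‖ ^ 2 ∂μ + ∫ y, ‖y‖ ^ 2 ∂ν - 2 * ⟪∫ x, x ∂μ, ∫ y, y ∂ν⟫ := by
  have hμ₁ := integrable_id_of_norm_pow hμ one_le_two
  have hν₁ := integrable_id_of_norm_pow hν one_le_two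
  have hinner := hμ₁.inner_prod hν₁
  have hμ₂ := hμ.comp_fst ν
  have hν₂ := hν.comp_snd μ
  simp_rw [norm_sub_sq_real]
  rw [integral_add (by fun_prop) hν₂, integral_sub hμ₂ (by fun_prop), integral_const_mul,
    integral_inner_prod hμ₁ hν₁, integral_fun_fst (fun x => ‖x‖ ^ 2),
    integral_fun_snd (fun y => ‖y‖ ^ 2)]
  simp only [probReal_univ, one_smul]
  ring

lemma integral_norm_sub_pow_four_prod (hμ : Integrable (fun x => ‖x‖ ^ 4) μ)
    (hν : Integrable (fun y => ‖y‖ ^ 4) ν) :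
    ∫ z, ‖z.1 - z.2‖ ^ 4 ∂(μ.prod ν)
      = ∫ x, ‖x‖ ^ 4 ∂μ + ∫ y, ‖y‖ ^ 4 ∂ν + 2 * (∫ x, ‖x‖ ^ 2 ∂μ) * ∫ y, ‖y‖ ^ 2 ∂ν
        + 4 * ∫ z, ⟪z.1, z.2⟫ ^ 2 ∂(μ.prod ν)
        - 4 * ⟪∫ y, y ∂ν, ∫ x, ‖x‖ ^ 2 • x ∂μ⟫ - 4 * ⟪∫ x, x ∂μ, ∫ y, ‖y‖ ^ 2 • y ∂ν⟫ := by
  have hμ₁ := integrable_id_of_norm_pow hμ (by norm_num)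
  have hν₁ := integrable_id_of_norm_pow hν (by norm_num)
  have hμ₂ := integrable_norm_sq_of_norm_pow hμ (by norm_num)
  have hν₂ := integrable_norm_sq_of_norm_pow hν (by norm_num)
  have hμ₃ := integrable_norm_sq_smul_of_norm_pow hμ (by norm_num)
  have hν₃ := integrable_norm_sq_smul_of_norm_pow hν (by norm_num)
  have h40 := hμ.comp_fst ν
  have h04 := hν.comp_snd μ
  have h22 := hμ₂.mul_prod hν₂
  have h31 := hμ₃.inner_prod hν₁
  have h13 := hμ₁.inner_prod hν₃
  have h11 : Integrable (fun z : E × E => ⟪z.1, z.2⟫ ^ 2) (μ.prod ν) :=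
    h22.mono' (by fun_prop) <| .of_forall fun z => by
      rw [Real.norm_eq_abs, abs_pow, ← mul_pow]
      exact pow_le_pow_left₀ (abs_nonneg _) (abs_real_inner_le_norm _ _) 2
  simp_rw [norm_sub_pow_four]
  rw [integral_sub (by fun_prop) (by fun_prop), integral_sub (by fun_prop) (by fun_prop),
    integral_add (by fun_prop) (by fun_prop), integral_add (by fun_prop) (by fun_prop),
    integral_add h40 h04, integral_const_mul, integral_const_mul, integral_const_mul,
    integral_const_mul, integral_prod_mul (fun x => ‖x‖ ^ 2) (fun y => ‖y‖ ^ 2),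
    integral_inner_prod hμ₃ hν₁, integral_inner_prod hμ₁ hν₃, integral_fun_fst (fun x => ‖x‖ ^ 4),
    integral_fun_snd (fun y => ‖y‖ ^ 4), real_inner_comm (∫ y, y ∂ν)]
  simp only [probReal_univ, one_smul]
  ring

end Moments

section Coordinates

variable {ι : Type*} [Fintype ι] {μ ν : Measure (EuclideanSpace ℝ ι)}

lemma integrable_coord_mul (hμ : Integrable (fun x => ‖x‖ ^ 2) μ) (j k : ι) :
    Integrable (fun x => x j * x k) μ :=
  hμ.mono' (by fun_prop) <| .of_forall fun x => by
    rw [norm_mul, sq]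
    exact mul_le_mul (PiLp.norm_apply_le x j) (PiLp.norm_apply_le x k) (norm_nonneg _)
      (norm_nonneg _)

lemma inner_sq_eq_sum_coord_mul (x y : EuclideanSpace ℝ ι) :
    ⟪x, y⟫ ^ 2 = ∑ j, ∑ k, (x j * x k) * (y j * y k) := by
  simp only [PiLp.inner_apply, RCLike.inner_apply, conj_trivial, sq, sum_mul_sum]
  exact sum_congr rfl fun j _ => sum_congr rfl fun k _ => by ring

lemma integral_inner_sq_prod [SFinite μ] [SFinite ν] (hμ : Integrable (fun x => ‖x‖ ^ 2) μ)
    (hν : Integrable (fun y => ‖y‖ ^ 2) ν) :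
    ∫ z, ⟪z.1, z.2⟫ ^ 2 ∂(μ.prod ν) = ∑ j, ∑ k, (∫ x, x j * x k ∂μ) * ∫ y, y j * y k ∂ν := by
  have h : ∀ j k, Integrable (fun z : EuclideanSpace ℝ ι × EuclideanSpace ℝ ι =>
      (z.1 j * z.1 k) * (z.2 j * z.2 k)) (μ.prod ν) := fun j k =>
    (integrable_coord_mul hμ j k).mul_prod (integrable_coord_mul hν j k)
  simp_rw [inner_sq_eq_sum_coord_mul]
  rw [integral_finsetSum _ fun j _ => integrable_finsetSum _ fun k _ => h j k]
  simp_rw [integral_finsetSum _ fun k _ => h _ k]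
  exact sum_congr rfl fun j _ => sum_congr rfl fun k _ =>
    integral_prod_mul (fun x : EuclideanSpace ℝ ι => x j * x k)
      (fun y : EuclideanSpace ℝ ι => y j * y k)

end Coordinates

section Covariance

variable {p : ℕ} {μ : Measure (EuclideanSpace ℝ (Fin p))}

lemma coordMean_eq (hμ : Integrable (fun x => x) μ) (j : Fin p) :
    coordMean μ j = (∫ x, x ∂μ) j :=
  (eval_integral_piLp hμ.eval_piLp j).symm

lemma covEntry_eq_sub [IsProbabilityMeasure μ] (hμ : Integrable (fun x => ‖x‖ ^ 2) μ)
    (j k : Fin p) :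
    covEntry μ j k = ∫ x, x j * x k ∂μ - coordMean μ j * coordMean μ k := by
  have hcoord : ∀ i : Fin p, MemLp (fun x : EuclideanSpace ℝ (Fin p) => x i) 2 μ := fun i =>
    (memLp_two_iff_integrable_sq (by fun_prop)).2 <| by
      simpa only [sq] using integrable_coord_mul hμ i i
  exact covariance_eq_sub (hcoord j) (hcoord k)

lemma sum_covEntry_self [IsProbabilityMeasure μ] (hμ : Integrable (fun x => ‖x‖ ^ 2) μ) :
    ∑ j, covEntry μ j j = ∫ x, ‖x‖ ^ 2 ∂μ - ‖∫ x, x ∂μ‖ ^ 2 := by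
  simp only [covEntry_eq_sub hμ, coordMean_eq (integrable_id_of_norm_pow hμ one_le_two),
    sum_sub_distrib, EuclideanSpace.real_norm_sq_eq, ← sq]
  rw [integral_finsetSum _ fun j _ => by simpa only [sq] using integrable_coord_mul hμ j j]

end Covariance

section VarSqDist

variable {p : ℕ} {μ ν : Measure (EuclideanSpace ℝ (Fin p))}

lemma varSqDist_eq_variance [IsProbabilityMeasure μ] [IsProbabilityMeasure ν]
    (hμ : Integrable (fun x => ‖x‖ ^ 4) μ) (hν : Integrable (fun y => ‖y‖ ^ 4) ν) :
    varSqDist μ ν = Var[fun z => ‖z.1 - z.2‖ ^ 2; μ.prod ν] := by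
  have hD := memLp_norm_sub_sq_prod hμ hν
  have hr : ∫ x, ∫ y, ‖x - y‖ ^ 2 ∂ν ∂μ = ∫ z, ‖z.1 - z.2‖ ^ 2 ∂(μ.prod ν) :=
    (integral_prod _ (hD.integrable one_le_two)).symm
  rw [variance_eq_integral hD.aemeasurable, integral_prod _ ?_, varSqDist, hr]
  exact (hD.sub (memLp_const _)).integrable_sq

lemma varSqDist_eq [IsProbabilityMeasure μ] [IsProbabilityMeasure ν]
    (hμ : Integrable (fun x => ‖x‖ ^ 4) μ) (hν : Integrable (fun y => ‖y‖ ^ 4) ν) :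
    varSqDist μ ν
      = ∫ z, ‖z.1 - z.2‖ ^ 4 ∂(μ.prod ν) - (∫ z, ‖z.1 - z.2‖ ^ 2 ∂(μ.prod ν)) ^ 2 := by
  rw [varSqDist_eq_variance hμ hν, variance_eq_sub]
  · simp only [Pi.pow_apply, ← pow_mul]
  · exact memLp_norm_sub_sq_prod hμ hν

lemma varSqDist_eq_moments [IsProbabilityMeasure μ] [IsProbabilityMeasure ν]
    (hμ : Integrable (fun x => ‖x‖ ^ 4) μ) (hν : Integrable (fun y => ‖y‖ ^ 4) ν) :
    varSqDist μ ν
      = ∫ x, ‖x‖ ^ 4 ∂μ + ∫ y, ‖y‖ ^ 4 ∂ν + 2 * (∫ x, ‖x‖ ^ 2 ∂μ) * ∫ y, ‖y‖ ^ 2 ∂ν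
        + 4 * ∑ j, ∑ k, (∫ x, x j * x k ∂μ) * ∫ y, y j * y k ∂ν
        - 4 * ⟪∫ y, y ∂ν, ∫ x, ‖x‖ ^ 2 • x ∂μ⟫ - 4 * ⟪∫ x, x ∂μ, ∫ y, ‖y‖ ^ 2 • y ∂ν⟫
        - (∫ x, ‖x‖ ^ 2 ∂μ + ∫ y, ‖y‖ ^ 2 ∂ν - 2 * ⟪∫ x, x ∂μ, ∫ y, y ∂ν⟫) ^ 2 := by
  have h2μ := integrable_norm_sq_of_norm_pow hμ (by norm_num)
  have h2ν := integrable_norm_sq_of_norm_pow hν (by norm_num)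
  rw [varSqDist_eq hμ hν, integral_norm_sub_pow_four_prod hμ hν, integral_norm_sub_sq_prod h2μ h2ν,
    integral_inner_sq_prod h2μ h2ν]

end VarSqDist

/-- If `X` and `Y` are independent with finite fourth moments, equal means and equal sums of
coordinate variances, then `2·Var(‖X₁−Y₁‖²) − Var(‖X₁−X₂‖²) − Var(‖Y₁−Y₂‖²)
= −4‖Σ_X − Σ_Y‖_F²`. -/
theorem stmt_17 {p : ℕ} (ν₁ ν₂ : Measure (EuclideanSpace ℝ (Fin p)))
    [IsProbabilityMeasure ν₁] [IsProbabilityMeasure ν₂]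
    (h4X : Integrable (fun x => ‖x‖ ^ 4) ν₁) (h4Y : Integrable (fun y => ‖y‖ ^ 4) ν₂)
    (hmean : (∫ x, x ∂ν₁) = ∫ y, y ∂ν₂)
    (hvar : (∑ j : Fin p, covEntry ν₁ j j) = ∑ j : Fin p, covEntry ν₂ j j) :
    2 * varSqDist ν₁ ν₂ - varSqDist ν₁ ν₁ - varSqDist ν₂ ν₂
      = -4 * ∑ j₁ : Fin p, ∑ j₂ : Fin p, (covEntry ν₁ j₁ j₂ - covEntry ν₂ j₁ j₂) ^ 2 := by
  have h2X := integrable_norm_sq_of_norm_pow h4X (by norm_num)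
  have h2Y := integrable_norm_sq_of_norm_pow h4Y (by norm_num)
  have hcoord : ∀ j, coordMean ν₂ j = coordMean ν₁ j := fun j => by
    rw [coordMean_eq (integrable_id_of_norm_pow h4X (by norm_num)),
      coordMean_eq (integrable_id_of_norm_pow h4Y (by norm_num)), hmean]
  have hsq : ∫ y, ‖y‖ ^ 2 ∂ν₂ = ∫ x, ‖x‖ ^ 2 ∂ν₁ := by
    rw [sum_covEntry_self h2X, sum_covEntry_self h2Y, hmean] at hvar
    linarith
  simp only [varSqDist_eq_moments h4X h4Y, varSqDist_eq_moments h4X h4X,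
    varSqDist_eq_moments h4Y h4Y, covEntry_eq_sub h2X, covEntry_eq_sub h2Y, hcoord, hmean, hsq]
  have hsq_sub : ∀ a b c : ℝ, (a - c - (b - c)) ^ 2 = a * a + b * b - 2 * (a * b) :=
    fun _ _ _ => by ring
  simp only [hsq_sub, sum_sub_distrib, sum_add_distrib, ← mul_sum]
  ring
end
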